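/- arXiv:1901.03364 — 5 statements merged into one kernel-verified Lean document; each statement's English description precedes it below -/
import Mathlib

section
/- Let G be a finite simple graph, k ∈ ℕ, H the set of vertices of G of degree at least k+1, and h = |H|. Then G has a vertex cover of size at most k if and only if h ≤ k and the subgraph of G induced on V \ H (after deleting isolated vertices of that subgraph) has a vertex cover of size at most k − h. -/
/-- Buss kernelization: G has a vertex cover of size ≤ k iff the number h of
high-degree vertices is ≤ k and the subgraph induced on the remaining vertices
has a vertex cover of size ≤ k − h. -/
theorem stmt_2 {V : Type*} [Fintype V] [DecidableEq V] (G : SimpleGraph V)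
    [DecidableRel G.Adj] (k : ℕ) (H : Finset V)
    (hH : H = Finset.univ.filter (fun v => k + 1 ≤ G.degree v))
    (h : ℕ) (hh : h = H.card) :
    (∃ X : Finset V, X.card ≤ k ∧ ∀ a b : V, G.Adj a b → a ∈ X ∨ b ∈ X) ↔
      (h ≤ k ∧ ∃ X : Finset V, X ⊆ Hᶜ ∧ X.card ≤ k - h ∧
        ∀ a b : V, G.Adj a b → a ∉ H → b ∉ H → a ∈ X ∨ b ∈ X) := by
  constructor
  · rintro ⟨X, hXk, hXcov⟩
    have hHX : H ⊆ X := by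
      intro v hv
      by_contra hvX
      have hsub : G.neighborFinset v ⊆ X := by
        intro u hu
        rw [SimpleGraph.mem_neighborFinset] at hu
        rcases hXcov v u hu with h1 | h1
        · exact absurd h1 hvX
        · exact h1
      have := Finset.card_le_card hsub
      rw [SimpleGraph.card_neighborFinset_eq_degree] at this
      rw [hH, Finset.mem_filter] at hv
      omega
    have hhk : h ≤ k := by
      rw [hh]; exact le_trans (Finset.card_le_card hHX) hXk
    refine ⟨hhk, X \ H, ?_, ?_, ?_⟩
    · intro x hx
      rw [Finset.mem_sdiff] at hx
      simpa [Finset.mem_compl] using hx.2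
    · rw [Finset.card_sdiff_of_subset hHX, ← hh]
      omega
    · intro a b hab ha hb
      rcases hXcov a b hab with h1 | h1
      · exact Or.inl (Finset.mem_sdiff.mpr ⟨h1, ha⟩)
      · exact Or.inr (Finset.mem_sdiff.mpr ⟨h1, hb⟩)
  · rintro ⟨hhk, X, hXH, hXc, hXcov⟩
    refine ⟨H ∪ X, ?_, ?_⟩
    · have hdisj : Disjoint H X := by
        rw [Finset.disjoint_right]
        intro x hx
        have := hXH hx
        simpa [Finset.mem_compl] using this
      rw [Finset.card_union_of_disjoint hdisj, ← hh]
      omega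
    · intro a b hab
      by_cases ha : a ∈ H
      · exact Or.inl (Finset.mem_union_left _ ha)
      by_cases hb : b ∈ H
      · exact Or.inr (Finset.mem_union_left _ hb)
      rcases hXcov a b hab ha hb with h1 | h1
      · exact Or.inl (Finset.mem_union_right _ h1)
      · exact Or.inr (Finset.mem_union_right _ h1)
end

section
/- Let E be a family of finite sets, each of size at most d, containing a sunflower S ⊆ E of size k+1 with core c where each petal properly contains c. Let E' = (E \ S) ∪ {c}. Then for every m ≤ k, E has a hitting set of size at most m if and only if E' has a hitting set of size at most m. -/
/-- Replacing a sunflower of size k+1 by its core preserves the existence of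
hitting sets of size at most m, for every m ≤ k. -/
theorem stmt_4 {α : Type*} [DecidableEq α] (k d : ℕ) (E S : Finset (Finset α))
    (c : Finset α)
    (hsize : ∀ e ∈ E, e.card ≤ d)
    (hSE : S ⊆ E) (hS : S.card = k + 1)
    (hcore : ∀ p ∈ S, ∀ q ∈ S, p ≠ q → p ∩ q = c)
    (hpetal : ∀ p ∈ S, c ⊂ p) :
    ∀ m ≤ k,
      ((∃ X : Finset α, X.card ≤ m ∧ ∀ e ∈ E, (e ∩ X).Nonempty) ↔
       (∃ X : Finset α, X.card ≤ m ∧ ∀ e ∈ (E \ S) ∪ {c}, (e ∩ X).Nonempty)) := by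
  intro m hm
  constructor
  · rintro ⟨X, hX, hhit⟩
    have hc : (c ∩ X).Nonempty := by
      by_contra hc
      choose f hf using fun p hp => hhit p (hSE hp)
      have hmap : ∀ p ∈ S.attach, f p.1 p.2 ∈ X := fun p _ =>
        (Finset.mem_inter.1 (hf p.1 p.2)).2
      have hcard : X.card < S.attach.card := by
        rw [Finset.card_attach, hS]; omega
      obtain ⟨p, hp, q, hq, hne, heq⟩ :=
        Finset.exists_ne_map_eq_of_card_lt_of_maps_to hcard hmap
      have hpq : p.1 ≠ q.1 := fun h => hne (Subtype.ext h)
      have hmem : f p.1 p.2 ∈ c := by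
        rw [← hcore p.1 p.2 q.1 q.2 hpq]
        exact Finset.mem_inter.2 ⟨(Finset.mem_inter.1 (hf p.1 p.2)).1,
          heq ▸ (Finset.mem_inter.1 (hf q.1 q.2)).1⟩
      exact hc ⟨f p.1 p.2, Finset.mem_inter.2 ⟨hmem, (Finset.mem_inter.1 (hf p.1 p.2)).2⟩⟩
    refine ⟨X, hX, fun e he => ?_⟩
    rcases Finset.mem_union.1 he with h | h
    · exact hhit e (Finset.mem_sdiff.1 h).1
    · simpa [Finset.mem_singleton.1 h] using hc
  · rintro ⟨X, hX, hhit⟩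
    refine ⟨X, hX, fun e he => ?_⟩
    by_cases hs : e ∈ S
    · obtain ⟨x, hx⟩ := hhit c (Finset.mem_union_right _ (Finset.mem_singleton_self c))
      exact ⟨x, Finset.mem_inter.2 ⟨(hpetal e hs).1 (Finset.mem_inter.1 hx).1,
        (Finset.mem_inter.1 hx).2⟩⟩
    · exact hhit e (Finset.mem_union_left _ (Finset.mem_sdiff.2 ⟨he, hs⟩))
end

section
/- (Sunflower Lemma, Erdős–Rado) Every family of more than k^d · d! distinct finite sets, each of size at most d, contains a sunflower of size k+1, i.e., k+1 pairwise distinct sets whose pairwise intersections are all equal to one common set. -/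
/-! Induction on `d`. Take a maximal pairwise disjoint subfamily `M` of `F`; if it has more than
`k` members it is already a sunflower with empty core. Otherwise every member of `F` equals or
meets a member of `M`, and counting the sets through each point shows that some point `a` lies in
more than `k ^ (d - 1) * (d - 1)!` members of `F`. Removing `a` from these sets and applying the
induction hypothesis gives a sunflower, and putting `a` back keeps it one. -/

open Finset
open scoped Nat

namespace Finset

variable {α : Type*} [DecidableEq α]

def IsSunflower (S : Finset (Finset α)) : Prop :=
  ∃ c, (S : Set (Finset α)).Pairwise fun p q => p ∩ q = c

lemma isSunflower_of_pairwiseDisjoint {S : Finset (Finset α)}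
    (hS : (S : Set (Finset α)).PairwiseDisjoint id) : IsSunflower S :=
  ⟨∅, hS.mono' fun _ _ => disjoint_iff_inter_eq_empty.mp⟩

lemma IsSunflower.image_insert {S : Finset (Finset α)} {a : α} (hS : IsSunflower S) :
    IsSunflower (S.image (insert a)) := by
  obtain ⟨c, hc⟩ := hS
  refine ⟨insert a c, ?_⟩
  simp only [coe_image]
  rintro _ ⟨p, hp, rfl⟩ _ ⟨q, hq, rfl⟩ hpq
  rw [← insert_inter_distrib, hc hp hq (ne_of_apply_ne _ hpq)]

lemma card_memberSubfamily (a : α) (F : Finset (Finset α)) :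
    #(F.memberSubfamily a) = #{s ∈ F | a ∈ s} := by
  rw [← image_insert_memberSubfamily, card_image_of_injOn]
  exact insert_erase_invOn.2.injOn.mono fun s hs => (mem_memberSubfamily.mp hs).2

lemma exists_isSunflower_of_subset_memberSubfamily {F S : Finset (Finset α)} {a : α}
    (hSF : S ⊆ F.memberSubfamily a) (hS : IsSunflower S) :
    ∃ T ⊆ F, #T = #S ∧ IsSunflower T := by
  have hmem : ∀ s ∈ S, insert a s ∈ F ∧ a ∉ s := fun s hs =>
    mem_memberSubfamily.mp (hSF hs)
  refine ⟨S.image (insert a), ?_, ?_, hS.image_insert⟩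
  · simpa only [image_subset_iff] using fun s hs => (hmem s hs).1
  · exact card_image_of_injOn <| insert_erase_invOn.2.injOn.mono fun s hs => (hmem s hs).2

lemma exists_maximal_pairwiseDisjoint (F : Finset (Finset α)) :
    ∃ M ⊆ F, (M : Set (Finset α)).PairwiseDisjoint id ∧
      ∀ s ∈ F, s ∈ M ∨ ∃ m ∈ M, ¬Disjoint s m := by
  classical
  obtain ⟨M, hM, hmax⟩ := exists_max_image
    (F.powerset.filter fun M : Finset (Finset α) => (M : Set (Finset α)).PairwiseDisjoint id)
    card ⟨∅, by simp⟩
  simp only [mem_filter, mem_powerset] at hM hmax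
  refine ⟨M, hM.1, hM.2, fun s hs => ?_⟩
  by_contra! hsM
  have hins : ((insert s M : Finset _) : Set (Finset α)).PairwiseDisjoint id := by
    rw [coe_insert]
    exact hM.2.insert fun m hm _ => hsM.2 m hm
  have := hmax (insert s M) ⟨insert_subset hs hM.1, hins⟩
  rw [card_insert_of_notMem hsM.1] at this
  omega

lemma card_filter_eq_or_not_disjoint_le {F : Finset (Finset α)} {m : Finset α} {d B : ℕ}
    (hm : #m ≤ d) (hdeg : ∀ a, #{s ∈ F | a ∈ s} ≤ B) (hdB : 1 ≤ d * B) :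
    #{s ∈ F | s = m ∨ ¬Disjoint s m} ≤ d * B := by
  rcases m.eq_empty_or_nonempty with rfl | ⟨b, hb⟩
  · calc #{s ∈ F | s = ∅ ∨ ¬Disjoint s ∅} ≤ #({∅} : Finset (Finset α)) := by
          refine card_le_card fun s hs => ?_
          simp_all
      _ ≤ d * B := by simpa using hdB
  · calc #{s ∈ F | s = m ∨ ¬Disjoint s m} ≤ #(m.biUnion fun a => {s ∈ F | a ∈ s}) := by
          refine card_le_card fun s hs => ?_
          obtain ⟨hsF, rfl | hsm⟩ := mem_filter.mp hs
          · exact mem_biUnion.mpr ⟨b, hb, mem_filter.mpr ⟨hsF, hb⟩⟩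
          · obtain ⟨a, has, ham⟩ := not_disjoint_iff.mp hsm
            exact mem_biUnion.mpr ⟨a, ham, mem_filter.mpr ⟨hsF, has⟩⟩
      _ ≤ #m * B := card_biUnion_le_card_mul _ _ _ fun a _ => hdeg a
      _ ≤ d * B := Nat.mul_le_mul_right B hm

lemma card_le_of_forall_pairwiseDisjoint_card_le {F : Finset (Finset α)} {k d B : ℕ}
    (hsize : ∀ s ∈ F, #s ≤ d) (hdeg : ∀ a, #{s ∈ F | a ∈ s} ≤ B) (hdB : 1 ≤ d * B)
    (hdisj : ∀ M ⊆ F, (M : Set (Finset α)).PairwiseDisjoint id → #M ≤ k) :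
    #F ≤ k * (d * B) := by
  obtain ⟨M, hMF, hM, hcover⟩ := exists_maximal_pairwiseDisjoint F
  calc #F ≤ #(M.biUnion fun m => {s ∈ F | s = m ∨ ¬Disjoint s m}) := by
        refine card_le_card fun s hs => mem_biUnion.mpr ?_
        obtain hsM | ⟨m, hm, hsm⟩ := hcover s hs
        · exact ⟨s, hsM, mem_filter.mpr ⟨hs, Or.inl rfl⟩⟩
        · exact ⟨m, hm, mem_filter.mpr ⟨hs, Or.inr hsm⟩⟩
    _ ≤ #M * (d * B) := card_biUnion_le_card_mul _ _ _ fun m hm =>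
        card_filter_eq_or_not_disjoint_le (hsize m (hMF hm)) hdeg hdB
    _ ≤ k * (d * B) := Nat.mul_le_mul_right _ (hdisj M hMF hM)

theorem exists_isSunflower_of_pow_mul_factorial_lt (k d : ℕ) (F : Finset (Finset α))
    (hsize : ∀ s ∈ F, #s ≤ d) (hF : k ^ d * d ! < #F) :
    ∃ S ⊆ F, #S = k + 1 ∧ IsSunflower S := by
  induction d generalizing F with
  | zero =>
    have : #F ≤ 1 := card_le_one.mpr fun s hs t ht => by
      rw [card_eq_zero.mp (Nat.le_zero.mp (hsize s hs)),
        card_eq_zero.mp (Nat.le_zero.mp (hsize t ht))]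
    simp only [pow_zero, Nat.factorial_zero, one_mul] at hF
    omega
  | succ d ih =>
    by_cases hlarge : ∃ M ⊆ F, (M : Set (Finset α)).PairwiseDisjoint id ∧ k + 1 ≤ #M
    · obtain ⟨M, hMF, hM, hkM⟩ := hlarge
      obtain ⟨S, hSM, hS⟩ := exists_subset_card_eq hkM
      exact ⟨S, hSM.trans hMF, hS, isSunflower_of_pairwiseDisjoint (hM.subset hSM)⟩
    push Not at hlarge
    by_cases hdense : ∃ a, k ^ d * d ! < #{s ∈ F | a ∈ s}
    · obtain ⟨a, ha⟩ := hdense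
      have hsize' : ∀ s ∈ F.memberSubfamily a, #s ≤ d := fun s hs => by
        obtain ⟨hsF, has⟩ := mem_memberSubfamily.mp hs
        have := hsize _ hsF
        rw [card_insert_of_notMem has] at this
        omega
      obtain ⟨S, hSF, hS, hsun⟩ := ih _ hsize' (by rwa [card_memberSubfamily])
      obtain ⟨T, hTF, hT, hTsun⟩ := exists_isSunflower_of_subset_memberSubfamily hSF hsun
      exact ⟨T, hTF, hT.trans hS, hTsun⟩
    push Not at hdense
    obtain ⟨s, hs⟩ := card_pos.mp (Nat.zero_lt_of_lt hF)
    have hk : 0 < k := by simpa using hlarge {s} (singleton_subset_iff.mpr hs) (by simp)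
    have hcount := card_le_of_forall_pairwiseDisjoint_card_le hsize hdense
      (Nat.one_le_iff_ne_zero.mpr (by positivity)) fun M hMF hM =>
        Nat.lt_succ_iff.mp (hlarge M hMF hM)
    have hbound : k * ((d + 1) * (k ^ d * d !)) = k ^ (d + 1) * (d + 1)! := by
      rw [pow_succ, Nat.factorial_succ]
      ring
    omega

end Finset

/-- Sunflower Lemma (Erdős–Rado): any family of more than k^d · d! distinct sets,
each of size at most d, contains a sunflower of size k+1. -/
theorem stmt_5 {α : Type*} [DecidableEq α] (k d : ℕ) (F : Finset (Finset α))
    (hsize : ∀ e ∈ F, e.card ≤ d)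
    (hbig : k ^ d * Nat.factorial d < F.card) :
    ∃ S ⊆ F, S.card = k + 1 ∧ ∃ c : Finset α,
      ∀ p ∈ S, ∀ q ∈ S, p ≠ q → p ∩ q = c :=
  exists_isSunflower_of_pow_mul_factorial_lt k d F hsize hbig
end

section
/- There is an n₀ ∈ ℕ such that for all n ≥ n₀ and all nonempty subsets X ⊆ {0,…,n−1}, there exist a prime p with p < |X|² · log₂ n and a natural number q < p such that the function h(m) = ((q·m) mod p) mod |X|² is injective on X. -/
/-!
If every prime `p ≤ N` divided `D = ∏_{x < y in X} (y - x)`, then the primorial `N#` would divide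
`D`. Since `D ≤ n ^ C(|X|, 2)` while Chebyshev's bound gives `log N# ≥ (1 - o(1)) N log 2`, this is
impossible for `N = |X|² ⌊log₂ n⌋ - 1` once `n` is large; so some prime `p < |X|² log₂ n` keeps the
elements of `X` distinct modulo `p`. For such `p` and each ordered pair `x ≠ y` of `X`, at most
`(p - 1) / |X|²` multipliers `q` make `q x mod p` and `q y mod p` collide modulo `|X|²`, because the
difference of the two residues determines `q (x - y)` modulo `p`. The `|X| (|X| - 1)` pairs thus
rule out fewer than `p - 1` multipliers, and any remaining `q ≠ 0` works
(Fredman–Komlós–Szemerédi).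
-/

open Real Filter Asymptotics Finset

lemma isLittleO_sqrt_mul_log_atTop : (fun x : ℝ => √x * log x) =o[atTop] id := by
  have hlog : log =o[atTop] fun x => √x := by
    simpa only [sqrt_eq_rpow] using isLittleO_log_rpow_atTop (by norm_num : (0 : ℝ) < 1 / 2)
  refine ((isBigO_refl (fun x : ℝ => √x) atTop).mul_isLittleO hlog).trans_eventuallyEq ?_
  filter_upwards [eventually_ge_atTop (0 : ℝ)] with x hx using mul_self_sqrt hx

lemma eventually_two_pow_lt_primorial_pow :
    ∀ᶠ N : ℕ in atTop, 2 ^ (3 * N) < primorial N ^ 4 := by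
  have hsmall := (isLittleO_sqrt_mul_log_atTop.natCast_atTop.def
    (by positivity : (0 : ℝ) < log 2 / 32))
  filter_upwards [hsmall, eventually_ge_atTop 2] with N hN hN2
  have hN2' : (2 : ℝ) ≤ N := by exact_mod_cast hN2
  have hlogN : 0 ≤ log N := log_nonneg (by linarith)
  have hlog_succ : log (N + 1) ≤ 2 * log N := by
    rw [← log_rpow (by linarith)]
    exact log_le_log (by positivity) (by norm_num; nlinarith)
  have hsqrt : 1 ≤ √(N : ℝ) := one_le_sqrt.2 (by linarith)
  have hθ := Chebyshev.theta_ge N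
  rw [Chebyshev.theta_eq_log_primorial, Nat.floor_natCast] at hθ
  simp only [id, Real.norm_eq_abs, abs_of_nonneg (by positivity : 0 ≤ √(N : ℝ) * log N),
    abs_of_nonneg (by positivity : (0 : ℝ) ≤ N)] at hN
  have hkey : log ((2 : ℝ) ^ (3 * N)) < log (((primorial N : ℕ) : ℝ) ^ 4) := by
    rw [Real.log_pow, Real.log_pow]
    push_cast
    nlinarith [mul_le_mul_of_nonneg_right hsqrt hlogN,
      mul_pos (by linarith : (0 : ℝ) < N) (log_pos one_lt_two)]
  exact_mod_cast (log_lt_log_iff (by positivity) (by have := primorial_pos N; positivity)).1 hkey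

def pairDiffProd (X : Finset ℕ) : ℕ := ∏ z ∈ X ×ˢ X with z.1 < z.2, (z.2 - z.1)

lemma pairDiffProd_ne_zero (X : Finset ℕ) : pairDiffProd X ≠ 0 :=
  prod_ne_zero_iff.2 fun z hz => by have := (mem_filter.1 hz).2; omega

lemma injOn_natCast_of_not_dvd_pairDiffProd {p : ℕ} {X : Finset ℕ}
    (h : ¬ p ∣ pairDiffProd X) : Set.InjOn (Nat.cast : ℕ → ZMod p) X := by
  have key : ∀ x ∈ X, ∀ y ∈ X, x < y → (x : ZMod p) ≠ y := fun x hx y hy hxy hZ =>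
    h <| ((Nat.modEq_iff_dvd' hxy.le).1 ((ZMod.natCast_eq_natCast_iff _ _ _).1 hZ)).trans <|
      dvd_prod_of_mem (fun z : ℕ × ℕ => z.2 - z.1) (a := (x, y))
        (mem_filter.2 ⟨mem_product.2 ⟨hx, hy⟩, hxy⟩)
  intro x hx y hy hZ
  by_contra hne
  rcases lt_or_gt_of_ne hne with hxy | hxy
  · exact key x hx y hy hxy hZ
  · exact key y hy x hx hxy hZ.symm

lemma pairDiffProd_le {n : ℕ} {X : Finset ℕ} (hX : ∀ x ∈ X, x < n) :
    pairDiffProd X ≤ n ^ (#X).choose 2 := by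
  rw [← card_product_filter_lt]
  exact prod_le_pow_card _ _ _ fun z hz => by
    have := hX _ (mem_product.1 (mem_filter.1 hz).1).2
    omega

lemma exists_prime_le_not_dvd_of_lt_primorial {D N : ℕ} (hD : D ≠ 0) (h : D < primorial N) :
    ∃ p, p.Prime ∧ p ≤ N ∧ ¬ p ∣ D := by
  by_contra! hall
  refine h.not_ge (Nat.le_of_dvd (Nat.pos_of_ne_zero hD) (prod_primes_dvd D ?_ ?_))
  · exact fun p hp => (mem_filter.1 hp).2.prime
  · intro p hp
    obtain ⟨hpN, hp⟩ := mem_filter.1 hp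
    exact hall p hp (Nat.lt_succ_iff.1 (mem_range.1 hpN))

lemma four_mul_choose_two_mul_succ_le {s m : ℕ} (hs : 1 ≤ s) (hm : 3 ≤ m) :
    4 * (s.choose 2 * (m + 1)) ≤ 3 * (s ^ 2 * m - 1) := by
  obtain ⟨k, rfl⟩ : ∃ k, s = k + 1 := ⟨s - 1, by omega⟩
  have h2 : 2 * (k + 1).choose 2 = (k + 1) * k := by
    rw [Nat.choose_two_right, Nat.add_sub_cancel, mul_comm (k + 1) k]
    exact Nat.mul_div_cancel' (Nat.even_mul_succ_self k).two_dvd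
  have h1 : 1 ≤ (k + 1) ^ 2 * m := by nlinarith
  zify [h1] at h2 ⊢
  nlinarith

def collisions (p t x y : ℕ) : Finset ℕ :=
  {q ∈ range p | q * y % p < q * x % p ∧ t ∣ q * x % p - q * y % p}

lemma natCast_mul_mod_sub_mul_mod {p q x y : ℕ} (h : q * y % p ≤ q * x % p) :
    ((q * x % p - q * y % p : ℕ) : ZMod p) = q * ((x : ZMod p) - y) := by
  rw [Nat.cast_sub h, ZMod.natCast_mod, ZMod.natCast_mod]
  push_cast
  ring

lemma card_collisions_le {p : ℕ} [Fact p.Prime] (t : ℕ) {x y : ℕ}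
    (hxy : (x : ZMod p) ≠ y) : #(collisions p t x y) ≤ (p - 1) / t := by
  calc #(collisions p t x y) ≤ #(Icc 1 ((p - 1) / t)) := by
        refine card_le_card_of_injOn (fun q => (q * x % p - q * y % p) / t) ?_ ?_
        · intro q hq
          rw [collisions, mem_coe, mem_filter] at hq
          obtain ⟨-, hlt, hdvd⟩ := hq
          have ht : 0 < t := Nat.pos_of_ne_zero (by rintro rfl; simp at hdvd; omega)
          have hmod := Nat.mod_lt (q * x) (Fact.out : p.Prime).pos
          simp only [coe_Icc, Set.mem_Icc]
          exact ⟨(Nat.one_le_div_iff ht).2 (Nat.le_of_dvd (by omega) hdvd),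
            Nat.div_le_div_right (by omega)⟩
        · intro q₁ hq₁ q₂ hq₂ heq
          rw [collisions, mem_coe, mem_filter, mem_range] at hq₁ hq₂
          have hdiff : q₁ * x % p - q₁ * y % p = q₂ * x % p - q₂ * y % p := by
            rw [← Nat.div_mul_cancel hq₁.2.2, ← Nat.div_mul_cancel hq₂.2.2]
            exact congrArg (· * t) heq
          have hZ := congrArg (Nat.cast : ℕ → ZMod p) hdiff
          rw [natCast_mul_mod_sub_mul_mod hq₁.2.1.le, natCast_mul_mod_sub_mul_mod hq₂.2.1.le]
            at hZ
          exact Nat.ModEq.eq_of_lt_of_lt ((ZMod.natCast_eq_natCast_iff _ _ _).1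
            (mul_right_cancel₀ (sub_ne_zero.2 hxy) hZ)) hq₁.1 hq₂.1
    _ = (p - 1) / t := by simp

theorem exists_injOn_mul_mod_mod {p t : ℕ} (hp : p.Prime) {X : Finset ℕ}
    (hX : Set.InjOn (Nat.cast : ℕ → ZMod p) X) (ht : #X * (#X - 1) < t) :
    ∃ q < p, Set.InjOn (fun m => q * m % p % t) X := by
  have := Fact.mk hp
  set bad := X.offDiag.biUnion fun z => collisions p t z.1 z.2
  have hbad : #bad < #((range p).erase 0) := by
    have hK : #X * (#X - 1) * ((p - 1) / t) < p - 1 := by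
      rcases Nat.eq_zero_or_pos ((p - 1) / t) with h0 | hK
      · simpa [h0] using hp.one_lt
      · calc #X * (#X - 1) * ((p - 1) / t) < t * ((p - 1) / t) := by gcongr
          _ ≤ p - 1 := Nat.mul_div_le _ _
    calc #bad ≤ ∑ z ∈ X.offDiag, #(collisions p t z.1 z.2) := card_biUnion_le
      _ ≤ ∑ _z ∈ X.offDiag, (p - 1) / t := sum_le_sum fun z hz => card_collisions_le t
          fun h => (mem_offDiag.1 hz).2.2 (hX (mem_offDiag.1 hz).1 (mem_offDiag.1 hz).2.1 h)
      _ < #((range p).erase 0) := by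
          rw [sum_const, smul_eq_mul, offDiag_card, ← Nat.mul_sub_one, card_erase_of_mem
            (mem_range.2 hp.pos), card_range]
          exact hK
  obtain ⟨q, hq, hqbad⟩ := exists_mem_notMem_of_card_lt_card hbad
  obtain ⟨hq0, hqp⟩ := mem_erase.1 hq
  refine ⟨q, mem_range.1 hqp, fun x hx y hy hxy => ?_⟩
  by_contra hne
  have hq0' : (q : ZMod p) ≠ 0 := by
    rw [Ne, ZMod.natCast_eq_zero_iff]
    exact fun h => hq0 (Nat.eq_zero_of_dvd_of_lt h (mem_range.1 hqp))
  have hres : q * x % p ≠ q * y % p := fun h => hne <| hX hx hy <| mul_left_cancel₀ hq0' <| by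
    simpa using congrArg (Nat.cast : ℕ → ZMod p) h
  have hcoll : ∀ a ∈ X, ∀ b ∈ X, a ≠ b → q * b % p < q * a % p →
      q * a % p % t = q * b % p % t → False := fun a ha b hb hab hlt heq =>
    hqbad <| mem_biUnion.2 ⟨(a, b), mem_offDiag.2 ⟨ha, hb, hab⟩,
      mem_filter.2 ⟨hqp, hlt, (Nat.modEq_iff_dvd' hlt.le).1 heq.symm⟩⟩
  rcases lt_or_gt_of_ne hres with h | h
  · exact hcoll y hy x hx (Ne.symm hne) h hxy.symm
  · exact hcoll x hx y hy hne h hxy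

/-- Universal hashing: for all large enough n and all nonempty X ⊆ {0,…,n−1}
there are a prime p < |X|²·log₂ n and q < p such that
m ↦ ((q·m) mod p) mod |X|² is injective on X. -/
theorem stmt_6 : ∃ n₀ : ℕ, ∀ n : ℕ, n₀ ≤ n → ∀ X : Finset ℕ, X.Nonempty →
    (∀ x ∈ X, x < n) →
    ∃ p q : ℕ, p.Prime ∧ (p : ℝ) < (X.card : ℝ) ^ 2 * Real.logb 2 n ∧ q < p ∧
      Set.InjOn (fun m => (q * m % p) % X.card ^ 2) ↑X := by
  obtain ⟨N₀, hN₀⟩ := eventually_atTop.1 eventually_two_pow_lt_primorial_pow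
  refine ⟨2 ^ (N₀ + 3), fun n hn X hX hXn => ?_⟩
  set s := #X
  set m := Nat.log 2 n
  have hm : N₀ + 3 ≤ m := Nat.le_log_of_pow_le one_lt_two hn
  have hs : 1 ≤ s := hX.card_pos
  set N := s ^ 2 * m - 1
  have hE : pairDiffProd X < primorial N := by
    refine lt_of_pow_lt_pow_left₀ 4 (Nat.zero_le _) ?_
    calc pairDiffProd X ^ 4 ≤ ((2 ^ (m + 1)) ^ s.choose 2) ^ 4 := by
          gcongr
          exact pairDiffProd_le fun x hx =>
            (hXn x hx).trans (Nat.lt_pow_succ_log_self one_lt_two n)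
      _ ≤ 2 ^ (3 * N) := by
          rw [← pow_mul, ← pow_mul]
          exact Nat.pow_le_pow_right two_pos
            (by linarith [four_mul_choose_two_mul_succ_le hs (m := m) (by omega)])
      _ < primorial N ^ 4 := hN₀ N (by have := Nat.le_mul_of_pos_left m (pow_pos hs 2); omega)
  obtain ⟨p, hp, hpN, hpE⟩ :=
    exists_prime_le_not_dvd_of_lt_primorial (pairDiffProd_ne_zero X) hE
  obtain ⟨q, hqp, hinj⟩ := exists_injOn_mul_mod_mod (t := s ^ 2) hp
    (injOn_natCast_of_not_dvd_pairDiffProd hpE)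
    (by rw [sq]; exact Nat.mul_lt_mul_of_pos_left (by omega) hs)
  refine ⟨p, q, hp, ?_, hqp, hinj⟩
  calc (p : ℝ) < s ^ 2 * m := by exact_mod_cast (show p < s ^ 2 * m by omega)
    _ ≤ s ^ 2 * Real.logb 2 n := by gcongr; exact Real.natLog_le_logb n 2
end

section
/- Let A be a finite set and let φ(C₁,…,C_k) be a property of k-tuples of subsets of A that is monotone (if φ holds for (A₁,…,A_k) and Aᵢ ⊆ Bᵢ for all i then φ holds for (B₁,…,B_k)) and has the small witness property with bound s (whenever φ holds for pairwise disjoint (B₁,…,B_k), there are Aᵢ ⊆ Bᵢ with |Aᵢ| ≤ s for all i such that φ holds for (A₁,…,A_k)). Then the following are equivalent: (1) there exist pairwise disjoint B₁,…,B_k ⊆ A partitioning A with φ(B₁,…,B_k); (2) there exist a set X ⊆ A with |X| ≤ k·s and a function f : X → {1,…,k} such that φ(f⁻¹(1),…,f⁻¹(k)) holds. -/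
/-- Correctness of color coding: for a monotone property φ with the small
witness property (bound s), a partition of A into k classes satisfying φ exists
iff there is a set X of size ≤ k·s and a coloring f of X whose color classes
satisfy φ. -/
theorem stmt_17 {α : Type*} [Fintype α] [DecidableEq α] (k s : ℕ) (hk : 0 < k)
    (φ : (Fin k → Finset α) → Prop)
    (hmono : ∀ A B : Fin k → Finset α, (∀ i, A i ⊆ B i) → φ A → φ B)
    (hwit : ∀ B : Fin k → Finset α,
      (∀ i j, i ≠ j → Disjoint (B i) (B j)) → φ B →
      ∃ A : Fin k → Finset α, (∀ i, A i ⊆ B i) ∧ (∀ i, (A i).card ≤ s) ∧ φ A) :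
    (∃ B : Fin k → Finset α, (∀ i j, i ≠ j → Disjoint (B i) (B j)) ∧
        Finset.univ.biUnion B = Finset.univ ∧ φ B) ↔
    (∃ X : Finset α, X.card ≤ k * s ∧ ∃ f : α → Fin k,
        φ (fun i => X.filter (fun a => f a = i))) := by
  classical
  constructor
  · rintro ⟨B, hdisj, hcover, hφ⟩
    obtain ⟨A, hAB, hAcard, hφA⟩ := hwit B hdisj hφ
    refine ⟨Finset.univ.biUnion A, ?_, ?_⟩
    · calc (Finset.univ.biUnion A).card ≤ ∑ i, (A i).card :=
            Finset.card_biUnion_le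
        _ ≤ ∑ _i : Fin k, s := Finset.sum_le_sum fun i _ => hAcard i
        _ = k * s := by simp [Finset.sum_const, Finset.card_univ]
    · refine ⟨fun a => if h : ∃ i, a ∈ B i then h.choose else ⟨0, hk⟩, ?_⟩
      refine hmono A _ (fun i a ha => ?_) hφA
      have haB : a ∈ B i := hAB i ha
      have hex : ∃ j, a ∈ B j := ⟨i, haB⟩
      have : hex.choose = i := by
        by_contra hne
        exact Finset.notMem_empty a (by
          simpa using (hdisj _ _ hne).le_bot (Finset.mem_inter.mpr ⟨hex.choose_spec, haB⟩))
      rw [Finset.mem_filter]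
      refine ⟨Finset.mem_biUnion.mpr ⟨i, Finset.mem_univ _, ha⟩, ?_⟩
      simp only [dif_pos hex, this]
  · rintro ⟨X, _, f, hφ⟩
    refine ⟨fun i => Finset.univ.filter (fun a => f a = i), ?_, ?_, ?_⟩
    · intro i j hij
      simp only [Finset.disjoint_filter]
      intro a _ hi hj
      exact hij (hi ▸ hj)
    · ext a
      simp only [Finset.mem_biUnion, Finset.mem_univ, iff_true]
      exact ⟨f a, trivial, Finset.mem_filter.mpr ⟨Finset.mem_univ _, rfl⟩⟩
    · exact hmono _ _ (fun i a ha => by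
        simp only [Finset.mem_filter] at ha ⊢
        exact ⟨Finset.mem_univ _, ha.2⟩) hφ
end
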